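/- The map sending a binary word w in the alphabet {1,2} with digit sum N to the set of all sums of suffixes of w whose first digit is 1 is a bijection between such binary words and Fibonacci sets of rank N. -/

import Mathlib

/-- `S` is a Fibonacci set of rank `N`: a subset of `{1,…,N}` whose cardinality has the
same parity as `N`, and whose `ℓ`-th smallest element (1-indexed) has the same parity as `ℓ`. -/
def IsFibSet (N : ℕ) (S : Finset ℕ) : Prop :=
  S ⊆ Finset.Icc 1 N ∧ S.card % 2 = N % 2 ∧
    ∀ i < S.card, ((S.sort (· ≤ ·)).getD i 0) % 2 = (i + 1) % 2

/-- The set of sums of the suffixes of the word `w` whose first digit is `1`. -/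
def suffixSums (w : List ℕ) : Finset ℕ :=
  ((Finset.range w.length).filter (fun i => w.getD i 0 = 1)).image (fun i => (w.drop i).sum)

/-!
A word `w` of rank `N` starts with `1` exactly when `N ∈ suffixSums w`. Prepending `1` to a word
of rank `N` adds `N + 1` to its set, prepending `2` changes nothing. Conversely, a Fibonacci set of
rank `N ≥ 1` either contains `N`, and removing it leaves a Fibonacci set of rank `N - 1`, or it
avoids `N`; then its maximum, which has the parity of `N`, is at most `N - 2`, so it is a Fibonacci
set of rank `N - 2`. Induction on the rank along these two moves gives injectivity and
surjectivity.
-/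

theorem Finset.sort_insert_of_forall_lt {α : Type*} [LinearOrder α] {s : Finset α} {a : α}
    (h : ∀ b ∈ s, b < a) : (insert a s).sort = s.sort ++ [a] := by
  have hnodup : (s.sort ++ [a]).Nodup :=
    List.nodup_append.2 ⟨s.sort_nodup _, List.nodup_singleton a,
      by simpa using fun b hb => (h b hb).ne⟩
  have htoFinset : (s.sort ++ [a]).toFinset = insert a s := by
    ext; simp
  rw [← htoFinset]
  exact (List.toFinset_sort _ hnodup).2 <| List.pairwise_append.2
    ⟨s.pairwise_sort _, List.pairwise_singleton _ _, by simpa using fun b hb => (h b hb).le⟩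

namespace IsFibSet

variable {N : ℕ} {S : Finset ℕ}

theorem add_two (h : IsFibSet N S) : IsFibSet (N + 2) S :=
  ⟨h.1.trans (Finset.Icc_subset_Icc le_rfl (by omega)), by rw [Nat.add_mod_right]; exact h.2.1,
    h.2.2⟩

theorem max'_mod_two (h : IsFibSet N S) (hne : S.Nonempty) : S.max' hne % 2 = N % 2 := by
  have hcard := Finset.card_pos.2 hne
  have hparity := h.2.1
  have hlast := h.2.2 (S.card - 1) (by omega)
  rw [List.getD_eq_getElem _ _ (by simp; omega)] at hlast
  rw [Finset.max'_eq_sorted_last]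
  simp only [Finset.length_sort]
  omega

theorem sub_two_of_notMem (h : IsFibSet N S) (hN0 : N ≠ 0) (hN : N ∉ S) :
    2 ≤ N ∧ IsFibSet (N - 2) S := by
  have hpos : ∀ x ∈ S, 1 ≤ x := fun x hx => (Finset.mem_Icc.1 (h.1 hx)).1
  have hmax : ∀ hne : S.Nonempty, S.max' hne + 2 ≤ N := fun hne => by
    have hmem := S.max'_mem hne
    have hle := (Finset.mem_Icc.1 (h.1 hmem)).2
    have hne' : S.max' hne ≠ N := fun he => hN (he ▸ hmem)
    have hpar := h.max'_mod_two hne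
    omega
  have hpar := h.2.1
  have h2N : 2 ≤ N := by
    rcases S.eq_empty_or_nonempty with rfl | hne
    · simp only [Finset.card_empty] at hpar
      omega
    · have := hpos _ (S.max'_mem hne)
      have := hmax hne
      omega
  refine ⟨h2N, fun x hx => ?_, by omega, h.2.2⟩
  have := hpos x hx
  have := hmax ⟨x, hx⟩
  have := S.le_max' x hx
  simp only [Finset.mem_Icc]
  omega

end IsFibSet

theorem isFibSet_insert_succ_iff {N : ℕ} {S : Finset ℕ} (hS : ∀ x ∈ S, x ≤ N) :
    IsFibSet (N + 1) (insert (N + 1) S) ↔ IsFibSet N S := by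
  have hlt : ∀ x ∈ S, x < N + 1 := fun x hx => Nat.lt_succ_of_le (hS x hx)
  have hcard : (insert (N + 1) S).card = S.card + 1 :=
    Finset.card_insert_of_notMem fun hN => (hlt _ hN).false
  have hIcc : S ⊆ Finset.Icc 1 (N + 1) ↔ S ⊆ Finset.Icc 1 N := by
    simp only [Finset.subset_iff, Finset.mem_Icc]
    exact forall₂_congr fun x hx => by have := hS x hx; omega
  have hlow : ∀ i < S.card, (S.sort ++ [N + 1]).getD i 0 = S.sort.getD i 0 :=
    fun i hi => List.getD_append _ _ _ _ (by simpa using hi)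
  have htop : (S.sort ++ [N + 1]).getD S.card 0 = N + 1 := by
    simp
  simp only [IsFibSet, Finset.sort_insert_of_forall_lt hlt, hcard, Finset.insert_subset_iff,
    Finset.mem_Icc, hIcc, Nat.forall_lt_succ_right, htop]
  constructor
  · rintro ⟨⟨-, hsub⟩, hpar, hsort, -⟩
    exact ⟨hsub, by omega, fun i hi => hlow i hi ▸ hsort i hi⟩
  · rintro ⟨hsub, hpar, hsort⟩
    exact ⟨⟨by omega, hsub⟩, by omega, fun i hi => hlow i hi ▸ hsort i hi, by omega⟩

theorem mem_suffixSums_cons {d x : ℕ} {w : List ℕ} :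
    x ∈ suffixSums (d :: w) ↔ (d = 1 ∧ x = (d :: w).sum) ∨ x ∈ suffixSums w := by
  simp only [suffixSums, Finset.mem_image, Finset.mem_filter, Finset.mem_range, List.length_cons]
  constructor
  · rintro ⟨_ | i, ⟨hi, hdigit⟩, rfl⟩
    · exact Or.inl ⟨by simpa using hdigit, rfl⟩
    · exact Or.inr ⟨i, ⟨by omega, by simpa using hdigit⟩, by simp⟩
  · rintro (⟨rfl, rfl⟩ | ⟨i, ⟨hi, hdigit⟩, rfl⟩)
    · exact ⟨0, ⟨by omega, rfl⟩, rfl⟩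
    · exact ⟨i + 1, ⟨by omega, by simpa using hdigit⟩, by simp⟩

theorem le_sum_of_mem_suffixSums {w : List ℕ} {x : ℕ} (hx : x ∈ suffixSums w) : x ≤ w.sum := by
  simp only [suffixSums, Finset.mem_image] at hx
  obtain ⟨i, -, rfl⟩ := hx
  conv_rhs => rw [← List.take_append_drop i w, List.sum_append]
  exact Nat.le_add_left _ _

theorem suffixSums_cons_one {w : List ℕ} :
    suffixSums (1 :: w) = insert (w.sum + 1) (suffixSums w) := by
  ext x
  simp [mem_suffixSums_cons, add_comm]

theorem suffixSums_cons_of_ne_one {d : ℕ} {w : List ℕ} (hd : d ≠ 1) :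
    suffixSums (d :: w) = suffixSums w := by
  ext x
  simp [mem_suffixSums_cons, hd]

theorem erase_sum_suffixSums_cons {d : ℕ} {w : List ℕ} (hd : d ≠ 0) :
    (suffixSums (d :: w)).erase (d :: w).sum = suffixSums w := by
  ext x
  simp only [Finset.mem_erase, mem_suffixSums_cons]
  constructor
  · rintro ⟨hne, ⟨-, rfl⟩ | hx⟩
    · exact absurd rfl hne
    · exact hx
  · intro hx
    have := le_sum_of_mem_suffixSums hx
    exact ⟨by simp only [List.sum_cons]; omega, Or.inr hx⟩

theorem sum_mem_suffixSums_cons_iff {d : ℕ} {w : List ℕ} (hd : d ≠ 0) :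
    (d :: w).sum ∈ suffixSums (d :: w) ↔ d = 1 := by
  rw [mem_suffixSums_cons]
  refine ⟨?_, fun h => Or.inl ⟨h, rfl⟩⟩
  rintro (⟨h, -⟩ | hx)
  · exact h
  · have := le_sum_of_mem_suffixSums hx
    simp only [List.sum_cons] at this
    omega

theorem isFibSet_suffixSums {w : List ℕ} (hw : ∀ d ∈ w, d = 1 ∨ d = 2) :
    IsFibSet w.sum (suffixSums w) := by
  induction w with
  | nil => simp [IsFibSet, suffixSums]
  | cons d w ih =>
    rw [List.forall_mem_cons] at hw
    rw [List.sum_cons, add_comm]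
    rcases hw.1 with rfl | rfl
    · rw [suffixSums_cons_one]
      exact (isFibSet_insert_succ_iff fun _ => le_sum_of_mem_suffixSums).2 (ih hw.2)
    · rw [suffixSums_cons_of_ne_one (by decide)]
      exact (ih hw.2).add_two

theorem eq_of_suffixSums_eq {w₁ w₂ : List ℕ} (hw₁ : ∀ d ∈ w₁, d = 1 ∨ d = 2)
    (hw₂ : ∀ d ∈ w₂, d = 1 ∨ d = 2) (hsum : w₁.sum = w₂.sum)
    (hS : suffixSums w₁ = suffixSums w₂) : w₁ = w₂ := by
  induction w₁ generalizing w₂ with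
  | nil =>
    cases w₂ with
    | nil => rfl
    | cons d w₂ =>
      have := hw₂ d List.mem_cons_self
      simp only [List.sum_nil, List.sum_cons] at hsum
      omega
  | cons d w₁ ih =>
    cases w₂ with
    | nil =>
      have := hw₁ d List.mem_cons_self
      simp only [List.sum_nil, List.sum_cons] at hsum
      omega
    | cons d' w₂ =>
      rw [List.forall_mem_cons] at hw₁ hw₂
      have hd : d ≠ 0 := by omega
      have hd' : d' ≠ 0 := by omega
      have hhead : d = d' := by
        have h₁ := sum_mem_suffixSums_cons_iff (w := w₁) hd
        rw [hsum, hS, sum_mem_suffixSums_cons_iff hd'] at h₁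
        omega
      subst hhead
      have htail : suffixSums w₁ = suffixSums w₂ := by
        rw [← erase_sum_suffixSums_cons hd, hS, hsum, erase_sum_suffixSums_cons hd]
      rw [ih hw₁.2 hw₂.2 (by simpa using hsum) htail]

theorem exists_suffixSums_eq {N : ℕ} {S : Finset ℕ} (hS : IsFibSet N S) :
    ∃ w : List ℕ, ((∀ d ∈ w, d = 1 ∨ d = 2) ∧ w.sum = N) ∧ suffixSums w = S := by
  induction N using Nat.strong_induction_on generalizing S with
  | _ N ih =>
    rcases Nat.eq_zero_or_pos N with rfl | hN0
    · refine ⟨[], ⟨by simp, rfl⟩, ?_⟩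
      simpa [suffixSums, eq_comm, Finset.subset_empty] using hS.1
    by_cases hN : N ∈ S
    · obtain ⟨M, rfl⟩ := Nat.exists_eq_add_one_of_ne_zero hN0.ne'
      have hle : ∀ x ∈ S.erase (M + 1), x ≤ M := fun x hx => by
        have := Finset.mem_Icc.1 (hS.1 (Finset.mem_of_mem_erase hx))
        have := Finset.ne_of_mem_erase hx
        omega
      have hS' : IsFibSet M (S.erase (M + 1)) :=
        (isFibSet_insert_succ_iff hle).1 (by rwa [Finset.insert_erase hN])
      obtain ⟨w, ⟨hw, rfl⟩, hwS⟩ := ih _ (by omega) hS'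
      refine ⟨1 :: w, ⟨List.forall_mem_cons.2 ⟨Or.inl rfl, hw⟩, by simp [add_comm]⟩, ?_⟩
      rw [suffixSums_cons_one, hwS, Finset.insert_erase hN]
    · obtain ⟨h2N, hS'⟩ := hS.sub_two_of_notMem hN0.ne' hN
      obtain ⟨w, ⟨hw, hsum⟩, rfl⟩ := ih (N - 2) (by omega) hS'
      exact ⟨2 :: w, ⟨List.forall_mem_cons.2 ⟨Or.inr rfl, hw⟩, by simp; omega⟩,
        suffixSums_cons_of_ne_one (by decide)⟩

/-- The map sending a binary word in the alphabet `{1,2}` with digit sum `N` to the set of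
sums of its suffixes whose first digit is `1` is a bijection onto the Fibonacci sets of
rank `N`. -/
theorem fibWord_bijOn (N : ℕ) :
    Set.BijOn suffixSums
      {w : List ℕ | (∀ d ∈ w, d = 1 ∨ d = 2) ∧ w.sum = N}
      {S : Finset ℕ | IsFibSet N S} :=
  ⟨fun _ ⟨hw, hsum⟩ => hsum ▸ isFibSet_suffixSums hw,
    fun _ ⟨hw₁, hsum₁⟩ _ ⟨hw₂, hsum₂⟩ => eq_of_suffixSums_eq hw₁ hw₂ (hsum₁.trans hsum₂.symm),
    fun _ hS => exists_suffixSums_eq hS⟩
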